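/- arXiv:math/9604226 — 2 statements merged into one kernel-verified Lean document; each statement's English description precedes it below -/
import Mathlib

section
/- Let W be a complex vector space of dimension n-1 with basis e₁,…,e_{n-1}, W̄ a second copy with basis ē₁,…,ē_{n-1}, and ω = Σⱼ eⱼ* ∧ ēⱼ* ∈ Λ²((W ⊕ W̄)*). Then for l + s ≥ n, the map L: Λ^{l-1}(W*) ⊗ Λ^{s-1}(W̄*) → Λ^{l}(W*) ⊗ Λ^{s}(W̄*), u ↦ ω ∧ u, is surjective. -/
open ExteriorAlgebra

/-- The basis vector `eⱼ` of `W` inside `W ⊕ W̄`. -/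
noncomputable def eVec (m : ℕ) (j : Fin m) : (Fin m → ℂ) × (Fin m → ℂ) :=
  (Pi.single j 1, 0)

/-- The basis vector `ēⱼ` of `W̄` inside `W ⊕ W̄`. -/
noncomputable def fVec (m : ℕ) (j : Fin m) : (Fin m → ℂ) × (Fin m → ℂ) :=
  (0, Pi.single j 1)

/-- The standard `(1,1)`-form `ω = Σⱼ eⱼ* ∧ ēⱼ*`, realized in the exterior algebra
of `W ⊕ W̄` via the self-dual bases. -/
noncomputable def omegaForm (m : ℕ) : ExteriorAlgebra ℂ ((Fin m → ℂ) × (Fin m → ℂ)) :=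
  ∑ j : Fin m, ι ℂ (eVec m j) * ι ℂ (fVec m j)

/-- The bidegree `(l, s)` piece `Λˡ(W*) ∧ Λˢ(W̄*)`, spanned by wedges of `l` of the
`eᵢ`'s and `s` of the `ēⱼ`'s. -/
noncomputable def piece (m l s : ℕ) :
    Submodule ℂ (ExteriorAlgebra ℂ ((Fin m → ℂ) × (Fin m → ℂ))) :=
  Submodule.span ℂ { x | ∃ I J : Finset (Fin m), I.card = l ∧ J.card = s ∧
    x = ((I.sort (· ≤ ·)).map fun i => ι ℂ (eVec m i)).prod *
        ((J.sort (· ≤ ·)).map fun j => ι ℂ (fVec m j)).prod }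

namespace HLComb

variable {α : Type*} [DecidableEq α]

/-- The "down" operator relative to ground set `S`. -/
noncomputable def DOp (S : Finset α) : (Finset α → ℂ) →ₗ[ℂ] (Finset α → ℂ) where
  toFun f := fun A => ∑ j ∈ S \ A, f (insert j A)
  map_add' f g := by funext A; simp [Finset.sum_add_distrib]
  map_smul' c f := by funext A; simp [Finset.mul_sum]

/-- The "multiply by `x_a`" operator. -/
noncomputable def MOp (a : α) : (Finset α → ℂ) →ₗ[ℂ] (Finset α → ℂ) where
  toFun f := fun A => if a ∈ A then f (A.erase a) else 0
  map_add' f g := by funext A; by_cases h : a ∈ A <;> simp [h]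
  map_smul' c f := by funext A; by_cases h : a ∈ A <;> simp [h]

lemma DOp_apply (S : Finset α) (f : Finset α → ℂ) (A : Finset α) :
    DOp S f A = ∑ j ∈ S \ A, f (insert j A) := rfl

lemma MOp_apply (a : α) (f : Finset α → ℂ) (A : Finset α) :
    MOp a f A = if a ∈ A then f (A.erase a) else 0 := rfl

lemma DOp_singleton_apply (a : α) (f : Finset α → ℂ) (A : Finset α) :
    DOp {a} f A = if a ∈ A then 0 else f (insert a A) := by
  rw [DOp_apply]
  by_cases h : a ∈ A
  · have h1 : ({a} : Finset α) \ A = ∅ :=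
      Finset.sdiff_eq_empty_iff_subset.2 (by simpa using h)
    simp [h1, h]
  · have h1 : ({a} : Finset α) \ A = {a} :=
      sdiff_eq_self_iff_disjoint.2 (by simp [h])
    simp [h1, h]


lemma DOp_insert (a : α) (S : Finset α) (ha : a ∉ S) :
    DOp (insert a S) = DOp S + DOp {a} := by
  ext f A
  simp only [LinearMap.add_apply, Pi.add_apply]
  rw [DOp_singleton_apply a f A]
  simp only [DOp_apply]
  by_cases h : a ∈ A
  · have h1 : insert a S \ A = S \ A := by
      ext x
      simp only [Finset.mem_sdiff, Finset.mem_insert]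
      constructor
      · rintro ⟨rfl | hx, hxA⟩
        · exact absurd h hxA
        · exact ⟨hx, hxA⟩
      · rintro ⟨hx, hxA⟩; exact ⟨Or.inr hx, hxA⟩
    simp [h1, h]
  · have h1 : insert a S \ A = insert a (S \ A) := by
      ext x
      simp only [Finset.mem_sdiff, Finset.mem_insert]
      constructor
      · rintro ⟨rfl | hx, hxA⟩
        · exact Or.inl rfl
        · exact Or.inr ⟨hx, hxA⟩
      · rintro (rfl | ⟨hx, hxA⟩)
        · exact ⟨Or.inl rfl, h⟩
        · exact ⟨Or.inr hx, hxA⟩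
    have h2 : a ∉ S \ A := by simp [ha]
    simp [h1, h, Finset.sum_insert h2, add_comm]

lemma commute_DOp_singleton (a : α) (S : Finset α) (ha : a ∉ S) :
    Commute (DOp S) (DOp ({a} : Finset α)) := by
  show _ = _
  ext f A
  simp only [Module.End.mul_apply]
  rw [DOp_apply, DOp_singleton_apply]
  by_cases h : a ∈ A
  · rw [Finset.sum_congr rfl (fun j hj => ?_), Finset.sum_const_zero, if_pos h]
    rw [DOp_singleton_apply, if_pos (Finset.mem_insert_of_mem h)]
  · rw [if_neg h, DOp_apply]
    have h1 : S \ insert a A = S \ A := by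
      ext x
      simp only [Finset.mem_sdiff, Finset.mem_insert, not_or]
      constructor
      · rintro ⟨hx, _, hxA⟩; exact ⟨hx, hxA⟩
      · rintro ⟨hx, hxA⟩; exact ⟨hx, fun hxa => ha (hxa ▸ hx), hxA⟩
    rw [h1]
    refine Finset.sum_congr rfl fun j hj => ?_
    rw [DOp_singleton_apply]
    have hj' : j ≠ a := fun e => ha (e ▸ (Finset.mem_sdiff.1 hj).1)
    rw [if_neg (by simp [h, hj'.symm]), Finset.insert_comm]

lemma DOp_singleton_sq (a : α) : DOp ({a} : Finset α) * DOp {a} = 0 := by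
  ext f A
  simp only [Module.End.mul_apply, LinearMap.zero_apply, Pi.zero_apply]
  rw [DOp_singleton_apply]
  by_cases h : a ∈ A
  · rw [if_pos h]
  · rw [if_neg h, DOp_singleton_apply, if_pos (Finset.mem_insert_self a A)]


lemma commute_DOp_MOp (a : α) (S : Finset α) (ha : a ∉ S) :
    Commute (DOp S) (MOp a) := by
  show _ = _
  ext g A
  simp only [Module.End.mul_apply]
  rw [DOp_apply, MOp_apply]
  by_cases h : a ∈ A
  · rw [if_pos h, DOp_apply]
    have h1 : S \ A.erase a = S \ A := by
      ext x
      simp only [Finset.mem_sdiff, Finset.mem_erase]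
      constructor
      · rintro ⟨hx, hx2⟩
        exact ⟨hx, fun hxA => hx2 ⟨fun e => ha (e ▸ hx), hxA⟩⟩
      · rintro ⟨hx, hxA⟩
        exact ⟨hx, fun h2 => hxA h2.2⟩
    rw [h1]
    refine Finset.sum_congr rfl fun j hj => ?_
    have hj' : j ≠ a := fun e => ha (e ▸ (Finset.mem_sdiff.1 hj).1)
    rw [MOp_apply, if_pos (Finset.mem_insert_of_mem h),
      Finset.erase_insert_of_ne hj']
  · rw [if_neg h]
    refine Finset.sum_eq_zero fun j hj => ?_
    have hj' : j ≠ a := fun e => ha (e ▸ (Finset.mem_sdiff.1 hj).1)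
    rw [MOp_apply, if_neg (by simp [h, hj'.symm])]

lemma DOp_singleton_MOp (a : α) (g : Finset α → ℂ) :
    DOp {a} (MOp a g) = g - MOp a (DOp {a} g) := by
  funext A
  by_cases h : a ∈ A
  · rw [DOp_singleton_apply, if_pos h, Pi.sub_apply, MOp_apply, if_pos h,
      DOp_singleton_apply, if_neg (Finset.notMem_erase a A),
      Finset.insert_erase h, sub_self]
  · rw [DOp_singleton_apply, if_neg h, MOp_apply,
      if_pos (Finset.mem_insert_self a A), Finset.erase_insert h,
      Pi.sub_apply, MOp_apply, if_neg h, sub_zero]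

lemma pow_add_of_sq_zero {R : Type*} [Ring R] (x y : R) (h : Commute x y)
    (hy : y * y = 0) : ∀ r : ℕ, 1 ≤ r → (x + y) ^ r = x ^ r + r • (x ^ (r - 1) * y) := by
  intro r hr
  induction r, hr using Nat.le_induction with
  | base => simp
  | succ r hr IH =>
    have h1 : x ^ (r - 1) * y * x = x ^ r * y := by
      rw [mul_assoc, ← h.eq, ← mul_assoc, ← pow_succ,
        show r - 1 + 1 = r by omega]
    have h2 : x ^ (r - 1) * y * y = 0 := by rw [mul_assoc, hy, mul_zero]
    rw [pow_succ, IH, add_mul, mul_add, smul_mul_assoc, mul_add, h1, h2,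
      add_zero, ← pow_succ, Nat.add_sub_cancel, succ_nsmul]
    abel

/-- `f` is supported on subsets of `S` of cardinality `k`. -/
def LevP (S : Finset α) (k : ℕ) (f : Finset α → ℂ) : Prop :=
  ∀ A : Finset α, ¬(A ⊆ S ∧ A.card = k) → f A = 0

lemma LevP.add {S k} {f g : Finset α → ℂ} (hf : LevP S k f) (hg : LevP S k g) :
    LevP S k (f + g) := fun A hA => by
  rw [Pi.add_apply, hf A hA, hg A hA, add_zero]

lemma LevP.nsmul {S k} {f : Finset α → ℂ} (n : ℕ) (hf : LevP S k f) :
    LevP S k (n • f) := fun A hA => by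
  rw [Pi.smul_apply, hf A hA, smul_zero]

lemma LevP.dop {S : Finset α} {k} {f : Finset α → ℂ} (hf : LevP S k f) :
    LevP S (k - 1) (DOp S f) := by
  intro A hA
  rw [DOp_apply]
  refine Finset.sum_eq_zero fun j hj => ?_
  obtain ⟨hjS, hjA⟩ := Finset.mem_sdiff.1 hj
  refine hf _ fun ⟨hsub, hcard⟩ => hA ⟨?_, ?_⟩
  · exact (Finset.subset_insert j A).trans hsub
  · rw [Finset.card_insert_of_notMem hjA] at hcard
    omega

lemma LevP.dop_pow {S : Finset α} {k} {f : Finset α → ℂ} (hf : LevP S k f) (i : ℕ) :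
    LevP S (k - i) ((DOp S ^ i) f) := by
  induction i with
  | zero => simpa using hf
  | succ i IH =>
    have : (DOp S ^ (i + 1)) f = DOp S ((DOp S ^ i) f) := by
      rw [pow_succ']
      rfl
    rw [this]
    have := IH.dop
    rwa [show k - i - 1 = k - (i + 1) by omega] at this

theorem dop_pow_inj (S : Finset α) : ∀ (k r : ℕ) (f : Finset α → ℂ), 1 ≤ r →
    S.card + r ≤ 2 * k → LevP S k f → (DOp S ^ r) f = 0 → f = 0 := by
  induction S using Finset.induction_on with
  | empty =>
    intro k r f hr hcard hf _
    funext A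
    refine hf A fun ⟨hsub, hcardA⟩ => ?_
    rw [Finset.subset_empty.1 hsub] at hcardA
    simp at hcardA
    omega
  | @insert a S' ha IH =>
    intro k r f hr hcard f_lev heq
    obtain ⟨r', rfl⟩ : ∃ r', r = r' + 1 := ⟨r - 1, by omega⟩
    rw [Finset.card_insert_of_notMem ha] at hcard
    set Dp := DOp S' with hDp
    set Pa := DOp ({a} : Finset α) with hPa
    set d := Pa f with hd
    set c := f - MOp a d with hc
    have hcomm : Commute Dp Pa := commute_DOp_singleton a S' ha
    have hcommM : Commute Dp (MOp a) := commute_DOp_MOp a S' ha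
    have h_c_off : ∀ B, a ∈ B → c B = 0 := by
      intro B hB
      rw [hc]
      simp only [Pi.sub_apply, MOp_apply, if_pos hB, hd]
      rw [DOp_singleton_apply, if_neg (Finset.notMem_erase a B),
        Finset.insert_erase hB, sub_self]
    have hPac : Pa c = 0 := by
      funext B
      rw [hPa, DOp_singleton_apply]
      by_cases h : a ∈ B
      · simp [h]
      · rw [if_neg h, h_c_off _ (Finset.mem_insert_self a B)]
        rfl
    have hPad : Pa d = 0 := by
      rw [hd, ← Module.End.mul_apply, DOp_singleton_sq, LinearMap.zero_apply]
    have hd_lev : LevP S' (k - 1) d := by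
      intro A hA
      rw [hd, hPa, DOp_singleton_apply]
      by_cases h : a ∈ A
      · rw [if_pos h]
      · rw [if_neg h]
        refine f_lev _ fun ⟨hsub, hcard2⟩ => hA ⟨?_, ?_⟩
        · intro x hx
          have := hsub (Finset.mem_insert_of_mem hx)
          rcases Finset.mem_insert.1 this with rfl | h2
          · exact absurd hx h
          · exact h2
        · rw [Finset.card_insert_of_notMem h] at hcard2
          omega
    have hc_lev : LevP S' k c := by
      intro A hA
      by_cases h : a ∈ A
      · exact h_c_off A h
      · rw [hc]
        simp only [Pi.sub_apply, MOp_apply, if_neg h, sub_zero]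
        refine f_lev _ fun ⟨hsub, hcard2⟩ => hA ⟨?_, hcard2⟩
        intro x hx
        rcases Finset.mem_insert.1 (hsub hx) with rfl | h2
        · exact absurd hx h
        · exact h2
    have hf_dec : f = c + MOp a d := by rw [hc]; abel
    -- expand the hypothesis
    rw [DOp_insert a S' ha, pow_add_of_sq_zero _ _ hcomm
      (DOp_singleton_sq a) (r' + 1) (by omega)] at heq
    simp only [Nat.add_sub_cancel] at heq
    rw [LinearMap.add_apply] at heq
    have hPaf : Pa f = d := rfl
    have hswap : (Dp ^ (r' + 1)) (MOp a d) = MOp a ((Dp ^ (r' + 1)) d) := by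
      rw [← Module.End.mul_apply, (hcommM.pow_left (r' + 1)).eq, Module.End.mul_apply]
    have heq2 : (Dp ^ (r' + 1)) c + MOp a ((Dp ^ (r' + 1)) d)
        + (r' + 1) • ((Dp ^ r') d) = 0 := by
      have e1 : (Dp ^ (r' + 1)) f = (Dp ^ (r' + 1)) c + MOp a ((Dp ^ (r' + 1)) d) := by
        conv_lhs => rw [hf_dec]
        rw [map_add, hswap]
      have e2 : ((r' + 1) • (Dp ^ r' * Pa)) f = (r' + 1) • ((Dp ^ r') d) := by
        rw [LinearMap.smul_apply, Module.End.mul_apply, hPaf]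
      rw [e1, e2] at heq
      exact heq
    have hDprd_lev : LevP S' (k - 1 - (r' + 1)) ((Dp ^ (r' + 1)) d) := hd_lev.dop_pow _
    have hDprc_lev : LevP S' (k - (r' + 1)) ((Dp ^ (r' + 1)) c) := hc_lev.dop_pow _
    have hDpr'd_lev : LevP S' (k - 1 - r') ((Dp ^ r') d) := hd_lev.dop_pow _
    have h1 : (Dp ^ (r' + 1)) d = 0 := by
      funext B
      by_cases h : a ∈ B
      · exact hDprd_lev B fun ⟨hsub, _⟩ => ha (hsub h)
      · have this0 := congrFun heq2 (insert a B)
        simp only [Pi.add_apply, Pi.smul_apply, Pi.zero_apply] at this0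
        have e1 : (Dp ^ (r' + 1)) c (insert a B) = 0 :=
          hDprc_lev _ fun ⟨hsub, _⟩ => ha (hsub (Finset.mem_insert_self a B))
        have e2 : (Dp ^ r') d (insert a B) = 0 :=
          hDpr'd_lev _ fun ⟨hsub, _⟩ => ha (hsub (Finset.mem_insert_self a B))
        have e3 : MOp a ((Dp ^ (r' + 1)) d) (insert a B) = (Dp ^ (r' + 1)) d B := by
          rw [MOp_apply, if_pos (Finset.mem_insert_self a B), Finset.erase_insert h]
        rw [e1, e2, e3, smul_zero, add_zero, zero_add] at this0
        exact this0
    have h2 : (Dp ^ (r' + 1)) c + (r' + 1) • ((Dp ^ r') d) = 0 := by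
      rw [h1, map_zero, add_zero] at heq2
      exact heq2
    have h3 : Dp c + (r' + 1) • d = 0 := by
      have hfact : (Dp ^ r') (Dp c + (r' + 1) • d) = 0 := by
        rw [map_add, map_nsmul, ← Module.End.mul_apply, ← pow_succ]
        exact h2
      rcases Nat.eq_zero_or_pos r' with rfl | hr'
      · simpa using hfact
      · exact IH (k - 1) r' _ hr' (by omega)
          ((hc_lev.dop).add (hd_lev.nsmul _)) hfact
    have h4 : (Dp ^ (r' + 2)) c = 0 := by
      have : (Dp ^ (r' + 2)) c = (Dp ^ (r' + 1)) (Dp c) := by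
        rw [pow_succ]
        rfl
      rw [this, eq_neg_of_add_eq_zero_left h3, map_neg, map_nsmul, h1]
      simp
    have hc0 : c = 0 := IH k (r' + 2) c (by omega) (by omega) hc_lev h4
    have hd0 : d = 0 := by
      rw [hc0, map_zero, zero_add] at h3
      funext A
      have h5 := congrFun h3 A
      simp only [Pi.smul_apply, Pi.zero_apply, nsmul_eq_mul] at h5
      exact (mul_eq_zero.1 h5).resolve_left
        (fun hz => Nat.succ_ne_zero r' (Nat.cast_eq_zero.1 hz))
    rw [hf_dec, hc0, hd0, map_zero, add_zero]


/-- The "up" operator relative to ground set `S`. -/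
noncomputable def USop (S : Finset α) : (Finset α → ℂ) →ₗ[ℂ] (Finset α → ℂ) where
  toFun f := fun B => if B ⊆ S then ∑ j ∈ B, f (B.erase j) else 0
  map_add' f g := by
    funext B
    by_cases h : B ⊆ S <;> simp [h, Finset.sum_add_distrib]
  map_smul' c f := by
    funext B
    by_cases h : B ⊆ S <;> simp [h, Finset.mul_sum]

lemma USop_apply (S : Finset α) (f : Finset α → ℂ) (B : Finset α) :
    USop S f B = if B ⊆ S then ∑ j ∈ B, f (B.erase j) else 0 := rfl

lemma LevP.usop {S : Finset α} {k : ℕ} (hk : 1 ≤ k) {f : Finset α → ℂ}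
    (hf : LevP S (k - 1) f) : LevP S k (USop S f) := by
  intro B hB
  rw [USop_apply]
  split_ifs with hBS
  · refine Finset.sum_eq_zero fun j hj => ?_
    refine hf _ fun ⟨hsub, hcard⟩ => hB ⟨hBS, ?_⟩
    rw [Finset.card_erase_of_mem hj] at hcard
    have : 1 ≤ B.card := Finset.card_pos.2 ⟨j, hj⟩
    omega
  · rfl

/-- Indicator function of a single finset. -/
noncomputable def delta (A₀ : Finset α) : Finset α → ℂ := fun A => if A = A₀ then 1 else 0

lemma delta_levP {S : Finset α} {k : ℕ} {A₀ : Finset α} (h1 : A₀ ⊆ S)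
    (h2 : A₀.card = k) : LevP S k (delta A₀) := by
  intro A hA
  rw [delta, if_neg]
  rintro rfl
  exact hA ⟨h1, h2⟩

section FT

variable [Fintype α]

lemma sum_delta_mul (A₀ : Finset α) (g : Finset α → ℂ) :
    ∑ A : Finset α, delta A₀ A * g A = g A₀ := by
  rw [Finset.sum_eq_single A₀]
  · simp [delta]
  · intro A _ hA
    simp [delta, hA]
  · intro h
    exact absurd (Finset.mem_univ A₀) h

lemma pairing_adjoint (S : Finset α) (f g : Finset α → ℂ)
    (hf : ∀ A : Finset α, ¬A ⊆ S → f A = 0) :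
    ∑ B : Finset α, USop S f B * g B = ∑ A : Finset α, f A * DOp S g A := by
  have hL : ∑ B : Finset α, USop S f B * g B
      = ∑ B ∈ S.powerset, ∑ j ∈ B, f (B.erase j) * g B := by
    rw [← Finset.sum_subset (Finset.subset_univ S.powerset)]
    · refine Finset.sum_congr rfl fun B hB => ?_
      rw [USop_apply, if_pos (Finset.mem_powerset.1 hB), Finset.sum_mul]
    · intro B _ hB
      rw [USop_apply, if_neg (fun h => hB (Finset.mem_powerset.2 h)), zero_mul]
  have hR : ∑ A : Finset α, f A * DOp S g A
      = ∑ A ∈ S.powerset, ∑ j ∈ S \ A, f A * g (insert j A) := by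
    rw [← Finset.sum_subset (Finset.subset_univ S.powerset)]
    · refine Finset.sum_congr rfl fun A _ => ?_
      rw [DOp_apply, Finset.mul_sum]
    · intro A _ hA
      rw [hf A (fun h => hA (Finset.mem_powerset.2 h)), zero_mul]
  rw [hL, hR, Finset.sum_sigma', Finset.sum_sigma']
  refine Finset.sum_nbij' (fun p => ⟨p.1.erase p.2, p.2⟩) (fun p => ⟨insert p.2 p.1, p.2⟩)
    ?_ ?_ ?_ ?_ ?_
  · rintro ⟨B, j⟩ hp
    rw [Finset.mem_sigma] at hp ⊢
    obtain ⟨hB, hj⟩ := hp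
    rw [Finset.mem_powerset] at hB ⊢
    exact ⟨(Finset.erase_subset j B).trans hB,
      Finset.mem_sdiff.2 ⟨hB hj, Finset.notMem_erase j B⟩⟩
  · rintro ⟨A, j⟩ hp
    rw [Finset.mem_sigma] at hp ⊢
    obtain ⟨hA, hj⟩ := hp
    rw [Finset.mem_powerset] at hA ⊢
    obtain ⟨hjS, hjA⟩ := Finset.mem_sdiff.1 hj
    exact ⟨Finset.insert_subset hjS hA, Finset.mem_insert_self j A⟩
  · rintro ⟨B, j⟩ hp
    rw [Finset.mem_sigma] at hp
    have : insert j (B.erase j) = B := Finset.insert_erase hp.2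
    simp [this]
  · rintro ⟨A, j⟩ hp
    rw [Finset.mem_sigma] at hp
    obtain ⟨_, hjA⟩ := Finset.mem_sdiff.1 hp.2
    have : (insert j A).erase j = A := Finset.erase_insert hjA
    simp [this]
  · rintro ⟨B, j⟩ hp
    rw [Finset.mem_sigma] at hp
    simp only
    rw [Finset.insert_erase hp.2]

/-- The level-`(S, k)` subspace. -/
noncomputable def Lev (S : Finset α) (k : ℕ) : Submodule ℂ (Finset α → ℂ) where
  carrier := {f | LevP S k f}
  add_mem' := LevP.add
  zero_mem' := fun A _ => rfl
  smul_mem' := fun c f hf A hA => by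
    rw [Pi.smul_apply, hf A hA, smul_zero]

lemma mem_Lev {S : Finset α} {k : ℕ} {f : Finset α → ℂ} :
    f ∈ Lev S k ↔ LevP S k f := Iff.rfl

/-- The monomial pairing, as a map to the dual. -/
noncomputable def pairingMap (X : Submodule ℂ (Finset α → ℂ)) :
    X →ₗ[ℂ] Module.Dual ℂ X where
  toFun g :=
    { toFun := fun f => ∑ A : Finset α, (f : Finset α → ℂ) A * (g : Finset α → ℂ) A
      map_add' := fun f₁ f₂ => by
        simp [Finset.sum_add_distrib, add_mul]
      map_smul' := fun c f₁ => by
        simp [Finset.mul_sum, mul_assoc] }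
  map_add' g₁ g₂ := by
    ext f
    simp [Finset.sum_add_distrib, mul_add]
  map_smul' c g := by
    ext f
    simp [Finset.mul_sum]
    refine Finset.sum_congr rfl fun A _ => ?_
    ring

lemma pairingMap_injective (S : Finset α) (k : ℕ) :
    Function.Injective (pairingMap (Lev S k)) := by
  intro g₁ g₂ hg
  have h : ∀ f : Lev S k, ∑ A : Finset α, (f : Finset α → ℂ) A * (g₁ : Finset α → ℂ) A
      = ∑ A : Finset α, (f : Finset α → ℂ) A * (g₂ : Finset α → ℂ) A := by
    intro f
    exact congrArg (fun φ => φ f) hg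
  ext A₀
  by_cases hA₀ : A₀ ⊆ S ∧ A₀.card = k
  · have := h ⟨delta A₀, delta_levP hA₀.1 hA₀.2⟩
    simpa [sum_delta_mul] using this
  · rw [g₁.2 A₀ hA₀, g₂.2 A₀ hA₀]

lemma pairingMap_surjective (S : Finset α) (k : ℕ) :
    Function.Surjective (pairingMap (Lev S k)) := by
  have h := (LinearMap.injective_iff_surjective_of_finrank_eq_finrank
    (Subspace.dual_finrank_eq (K := ℂ) (V := Lev S k)).symm).1
    (pairingMap_injective S k)
  exact h

theorem usop_surj (S : Finset α) (k : ℕ) (hk : S.card + 1 ≤ 2 * k)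
    (g : Finset α → ℂ) (hg : LevP S k g) :
    ∃ f : Finset α → ℂ, LevP S (k - 1) f ∧ USop S f = g := by
  have hk1 : 1 ≤ k := by omega
  have hmaps : ∀ f ∈ Lev S (k - 1), USop S f ∈ Lev S k :=
    fun f hf => (LevP.usop hk1 hf : LevP S k _)
  set T : (Lev S (k - 1) : Submodule ℂ (Finset α → ℂ)) →ₗ[ℂ] Lev S k :=
    (USop S).restrict hmaps with hT
  have hTsurj : Function.Surjective T := by
    rw [← LinearMap.dualMap_injective_iff]
    intro φ₁ φ₂ hφ
    suffices h : ∀ φ : Module.Dual ℂ (Lev S k), T.dualMap φ = 0 → φ = 0 by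
      have := h (φ₁ - φ₂) (by rw [map_sub, hφ, sub_self])
      exact sub_eq_zero.1 this
    intro φ hφ0
    obtain ⟨g₀, rfl⟩ := pairingMap_surjective S k φ
    have hg₀d : DOp S (g₀ : Finset α → ℂ) = 0 := by
      have key : ∀ A₀ : Finset α, A₀ ⊆ S → A₀.card = k - 1 →
          DOp S (g₀ : Finset α → ℂ) A₀ = 0 := by
        intro A₀ hA₀S hA₀c
        have hδ : (delta A₀ : Finset α → ℂ) ∈ Lev S (k - 1) :=
          delta_levP hA₀S hA₀c
        have h0 : pairingMap (Lev S k) g₀ (T ⟨delta A₀, hδ⟩) = 0 := by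
          have := congrArg (fun ψ => ψ (⟨delta A₀, hδ⟩ : Lev S (k - 1))) hφ0
          simpa using this
        have hTval : ((T ⟨delta A₀, hδ⟩ : Lev S k) : Finset α → ℂ)
            = USop S (delta A₀) := by
          rw [hT]
          exact LinearMap.restrict_coe_apply _ _ _
        rw [show pairingMap (Lev S k) g₀ (T ⟨delta A₀, hδ⟩)
            = ∑ A : Finset α, ((T ⟨delta A₀, hδ⟩ : Lev S k) : Finset α → ℂ) A
              * (g₀ : Finset α → ℂ) A from rfl, hTval,
          pairing_adjoint S _ _ (fun A hA => delta_levP hA₀S hA₀c A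
            (fun hc => hA hc.1)), sum_delta_mul] at h0
        exact h0
      funext A₀
      by_cases hA₀ : A₀ ⊆ S ∧ A₀.card = k - 1
      · exact key A₀ hA₀.1 hA₀.2
      · exact (LevP.dop g₀.2) A₀ hA₀
    have hg₀0 : (g₀ : Finset α → ℂ) = 0 := by
      refine dop_pow_inj S k 1 _ le_rfl (by omega) g₀.2 ?_
      rw [pow_one]
      exact hg₀d
    have : g₀ = 0 := Subtype.ext hg₀0
    rw [this, map_zero]
  obtain ⟨f₀, hf₀⟩ := hTsurj ⟨g, hg⟩
  refine ⟨(f₀ : Finset α → ℂ), f₀.2, ?_⟩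
  have := congrArg (Subtype.val) hf₀
  rwa [hT, LinearMap.restrict_coe_apply] at this

end FT

end HLComb

namespace HLExt

section General

variable {V : Type*} [AddCommGroup V] [Module ℂ V]

lemma iota_anticomm (x y : V) : ι ℂ x * ι ℂ y = -(ι ℂ y * ι ℂ x) := by
  exact eq_neg_of_add_eq_zero_left (ι_add_mul_swap x y)

/-- Move `ι v` from the right of a product of `ι`'s to the left. -/
lemma prod_mul_iota {β : Type*} (G : β → V) :
    ∀ (L : List β) (v : V), ∃ c : ℂˣ,
      (L.map fun i => ι ℂ (G i)).prod * ι ℂ v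
        = (c : ℂ) • (ι ℂ v * (L.map fun i => ι ℂ (G i)).prod) := by
  intro L
  induction L with
  | nil => intro v; exact ⟨1, by simp⟩
  | cons w L IH =>
    intro v
    obtain ⟨c, hc⟩ := IH v
    refine ⟨-c, ?_⟩
    rw [List.map_cons, List.prod_cons, mul_assoc, hc, mul_smul_comm,
      ← mul_assoc, iota_anticomm (G w) v]
    simp [smul_smul, mul_assoc]

/-- Move `ι v` from the left of a product of `ι`'s to the right. -/
lemma iota_mul_prod {β : Type*} (G : β → V) (L : List β) (v : V) :
    ∃ c : ℂˣ, ι ℂ v * (L.map fun i => ι ℂ (G i)).prod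
      = (c : ℂ) • ((L.map fun i => ι ℂ (G i)).prod * ι ℂ v) := by
  obtain ⟨c, hc⟩ := prod_mul_iota G L v
  exact ⟨c⁻¹, by rw [hc, smul_smul]; simp⟩

/-- Pull `ι (G j)` out of a product over a list containing `j`. -/
lemma prod_pull_out {β : Type*} [DecidableEq β] (G : β → V) :
    ∀ (L : List β) (j : β), j ∈ L → ∃ c : ℂˣ,
      (L.map fun i => ι ℂ (G i)).prod
        = (c : ℂ) • (ι ℂ (G j) * ((L.erase j).map fun i => ι ℂ (G i)).prod) := by
  intro L
  induction L with
  | nil => intro j hj; exact absurd hj List.not_mem_nil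
  | cons w L IH =>
    intro j hj
    by_cases h : w = j
    · subst h
      exact ⟨1, by simp [List.erase_cons_head]⟩
    · have hjL : j ∈ L := by
        rcases List.mem_cons.1 hj with rfl | h2
        · exact absurd rfl h
        · exact h2
      obtain ⟨c, hc⟩ := IH j hjL
      refine ⟨-c, ?_⟩
      rw [List.erase_cons_tail (by simp [h]), List.map_cons, List.prod_cons,
        List.map_cons, List.prod_cons, hc, mul_smul_comm, ← mul_assoc,
        iota_anticomm (G w) (G j)]
      simp [smul_smul, mul_assoc]

lemma iota_mul_prod_of_mem {β : Type*} [DecidableEq β] (G : β → V) (L : List β) (j : β)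
    (hj : j ∈ L) : ι ℂ (G j) * (L.map fun i => ι ℂ (G i)).prod = 0 := by
  obtain ⟨c, hc⟩ := prod_pull_out G L j hj
  rw [hc, mul_smul_comm, ← mul_assoc, ι_sq_zero, zero_mul, smul_zero]

end General


section Spec

variable {m : ℕ}

noncomputable def Ev (m : ℕ) (j : Fin m) : ExteriorAlgebra ℂ ((Fin m → ℂ) × (Fin m → ℂ)) :=
  ι ℂ (eVec m j)

noncomputable def Fv (m : ℕ) (j : Fin m) : ExteriorAlgebra ℂ ((Fin m → ℂ) × (Fin m → ℂ)) :=
  ι ℂ (fVec m j)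

noncomputable def Xv (m : ℕ) (j : Fin m) : ExteriorAlgebra ℂ ((Fin m → ℂ) × (Fin m → ℂ)) :=
  ι ℂ (eVec m j) * ι ℂ (fVec m j)

noncomputable def eP (m : ℕ) (I : Finset (Fin m)) :
    ExteriorAlgebra ℂ ((Fin m → ℂ) × (Fin m → ℂ)) :=
  ((I.sort (· ≤ ·)).map fun i => ι ℂ (eVec m i)).prod

noncomputable def fP (m : ℕ) (J : Finset (Fin m)) :
    ExteriorAlgebra ℂ ((Fin m → ℂ) × (Fin m → ℂ)) :=
  ((J.sort (· ≤ ·)).map fun j => ι ℂ (fVec m j)).prod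

lemma Xv_comm_iota (j : Fin m) (v : (Fin m → ℂ) × (Fin m → ℂ)) :
    Commute (Xv m j) (ι ℂ v) := by
  show _ = _
  rw [Xv, mul_assoc, iota_anticomm (fVec m j) v, mul_neg, ← mul_assoc,
    iota_anticomm (eVec m j) v, neg_mul, neg_neg, mul_assoc]

lemma Xv_comm_Xv (i j : Fin m) : Commute (Xv m i) (Xv m j) :=
  (Xv_comm_iota i (eVec m j)).mul_right (Xv_comm_iota i (fVec m j))

lemma Xv_sq (j : Fin m) : Xv m j * Xv m j = 0 := by
  rw [Xv, mul_assoc, ← mul_assoc (ι ℂ (fVec m j)),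
    iota_anticomm (fVec m j) (eVec m j), neg_mul, mul_neg, mul_assoc,
    ι_sq_zero, mul_zero, mul_zero, neg_zero]

noncomputable def xP (m : ℕ) (K : Finset (Fin m)) :
    ExteriorAlgebra ℂ ((Fin m → ℂ) × (Fin m → ℂ)) :=
  K.noncommProd (fun j => Xv m j) (fun i _ j _ _ => Xv_comm_Xv i j)

lemma xP_empty : xP m ∅ = 1 := Finset.noncommProd_empty _ _

lemma xP_insert (j : Fin m) (K : Finset (Fin m)) (h : j ∉ K) :
    xP m (insert j K) = Xv m j * xP m K :=
  Finset.noncommProd_insert_of_notMem _ _ _ _ h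

lemma Xv_comm_prodList (j : Fin m) {β : Type*} (G : β → (Fin m → ℂ) × (Fin m → ℂ))
    (L : List β) : Commute (Xv m j) ((L.map fun i => ι ℂ (G i)).prod) := by
  refine Commute.list_prod_right _ _ fun y hy => ?_
  obtain ⟨i, _, rfl⟩ := List.mem_map.1 hy
  exact Xv_comm_iota j (G i)

lemma Xv_comm_eP (j : Fin m) (I : Finset (Fin m)) : Commute (Xv m j) (eP m I) :=
  Xv_comm_prodList j (eVec m) _

lemma Xv_comm_fP (j : Fin m) (J : Finset (Fin m)) : Commute (Xv m j) (fP m J) :=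
  Xv_comm_prodList j (fVec m) _

lemma comm_xP (j : Fin m) (K : Finset (Fin m))
    (z : ExteriorAlgebra ℂ ((Fin m → ℂ) × (Fin m → ℂ)))
    (hz : ∀ i : Fin m, Commute z (Xv m i)) : Commute z (xP m K) :=
  Finset.noncommProd_commute _ _ _ _ fun i _ => hz i

lemma Xv_mul_xP_of_mem (j : Fin m) (K : Finset (Fin m)) (h : j ∈ K) :
    Xv m j * xP m K = 0 := by
  rw [← Finset.insert_erase h, xP_insert j _ (Finset.notMem_erase j K),
    ← mul_assoc, Xv_sq, zero_mul]

lemma sort_erase (I : Finset (Fin m)) (j : Fin m) :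
    (I.sort (· ≤ ·)).erase j = (I.erase j).sort (· ≤ ·) := by
  refine List.Perm.eq_of_pairwise'
    (List.Pairwise.sublist (List.erase_sublist (a := j)) (Finset.pairwise_sort _ _))
    (Finset.pairwise_sort _ _) ?_
  have p1 : List.Perm ((I.sort (· ≤ ·)).erase j) (I.toList.erase j) :=
    (Finset.sort_perm_toList I _).erase j
  have p2 : List.Perm (I.toList.erase j) ((I.erase j).toList) := by
    refine Multiset.coe_eq_coe.1 ?_
    rw [← Multiset.coe_erase, Finset.coe_toList, Finset.coe_toList,
      Finset.erase_val]
  have p3 : List.Perm ((I.erase j).toList) ((I.erase j).sort (· ≤ ·)) :=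
    (Finset.sort_perm_toList _ _).symm
  exact (p1.trans p2).trans p3

lemma eP_erase (I : Finset (Fin m)) (j : Fin m) (hj : j ∈ I) :
    ∃ c : ℂˣ, eP m I = (c : ℂ) • (ι ℂ (eVec m j) * eP m (I.erase j)) := by
  obtain ⟨c, hc⟩ := prod_pull_out (eVec m) (I.sort (· ≤ ·)) j
    ((Finset.mem_sort _).2 hj)
  rw [sort_erase] at hc
  exact ⟨c, hc⟩

lemma fP_erase (J : Finset (Fin m)) (j : Fin m) (hj : j ∈ J) :
    ∃ c : ℂˣ, fP m J = (c : ℂ) • (ι ℂ (fVec m j) * fP m (J.erase j)) := by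
  obtain ⟨c, hc⟩ := prod_pull_out (fVec m) (J.sort (· ≤ ·)) j
    ((Finset.mem_sort _).2 hj)
  rw [sort_erase] at hc
  exact ⟨c, hc⟩

lemma iota_e_mul_eP_of_mem (I : Finset (Fin m)) (j : Fin m) (hj : j ∈ I) :
    ι ℂ (eVec m j) * eP m I = 0 :=
  iota_mul_prod_of_mem (eVec m) _ j ((Finset.mem_sort _).2 hj)

lemma iota_f_mul_fP_of_mem (J : Finset (Fin m)) (j : Fin m) (hj : j ∈ J) :
    ι ℂ (fVec m j) * fP m J = 0 :=
  iota_mul_prod_of_mem (fVec m) _ j ((Finset.mem_sort _).2 hj)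

set_option maxHeartbeats 1000000 in
/-- Normal form of a generator. -/
lemma gen_normal : ∀ (n : ℕ) (I J : Finset (Fin m)), (I ∩ J).card = n →
    ∃ c : ℂˣ, eP m I * fP m J
      = (c : ℂ) • (xP m (I ∩ J) * (eP m (I \ J) * fP m (J \ I))) := by
  intro n
  induction n with
  | zero =>
    intro I J hn
    have hIJ : I ∩ J = ∅ := Finset.card_eq_zero.1 hn
    have hd : Disjoint I J := by
      rwa [Finset.disjoint_iff_inter_eq_empty]
    refine ⟨1, ?_⟩
    rw [hIJ, xP_empty, one_mul, Units.val_one, one_smul,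
      sdiff_eq_self_iff_disjoint.2 hd.symm, sdiff_eq_self_iff_disjoint.2 hd]
  | succ n IH =>
    intro I J hn
    have hne : (I ∩ J).Nonempty := Finset.card_pos.1 (by omega)
    obtain ⟨j, hjIJ⟩ := hne
    have hjI : j ∈ I := (Finset.mem_inter.1 hjIJ).1
    have hjJ : j ∈ J := (Finset.mem_inter.1 hjIJ).2
    obtain ⟨c₁, hc₁⟩ := eP_erase I j hjI
    obtain ⟨c₂, hc₂⟩ := fP_erase J j hjJ
    obtain ⟨c₃, hc₃⟩ := iota_mul_prod (eVec m) ((I.erase j).sort (· ≤ ·)) (fVec m j)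
    have hIJe : I.erase j ∩ J.erase j = (I ∩ J).erase j := by
      ext x
      simp only [Finset.mem_inter, Finset.mem_erase]
      tauto
    have hIe : I.erase j \ J.erase j = I \ J := by
      ext x
      simp only [Finset.mem_sdiff, Finset.mem_erase, not_and]
      constructor
      · rintro ⟨⟨hxj, hxI⟩, hx2⟩
        exact ⟨hxI, fun hxJ => absurd (hx2 hxj) (fun h => h hxJ)⟩
      · rintro ⟨hxI, hxJ⟩
        exact ⟨⟨fun e => hxJ (e ▸ hjJ), hxI⟩, fun _ h => absurd h hxJ⟩
    have hJe : J.erase j \ I.erase j = J \ I := by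
      ext x
      simp only [Finset.mem_sdiff, Finset.mem_erase, not_and]
      constructor
      · rintro ⟨⟨hxj, hxJ⟩, hx2⟩
        exact ⟨hxJ, fun hxI => absurd (hx2 hxj) (fun h => h hxI)⟩
      · rintro ⟨hxJ, hxI⟩
        exact ⟨⟨fun e => hxI (e ▸ hjI), hxJ⟩, fun _ h => absurd h hxI⟩
    have hcard : (I.erase j ∩ J.erase j).card = n := by
      rw [hIJe, Finset.card_erase_of_mem hjIJ, hn]
      omega
    obtain ⟨c₄, hc₄⟩ := IH (I.erase j) (J.erase j) hcard
    rw [hIJe, hIe, hJe] at hc₄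
    set E := ι ℂ (eVec m j) with hE
    set F := ι ℂ (fVec m j) with hF
    set PE := eP m (I.erase j) with hPE
    set PF := fP m (J.erase j) with hPF
    set K' := (I ∩ J).erase j with hK'
    set R := eP m (I \ J) * fP m (J \ I) with hR
    have hPEF : PE * F = ((c₃⁻¹ : ℂˣ) : ℂ) • (F * PE) := by
      rw [hPE, show eP m (I.erase j)
          = (((I.erase j).sort (· ≤ ·)).map fun i => ι ℂ (eVec m i)).prod from rfl,
        hF, hc₃, smul_smul]
      norm_num
      rfl
    have hIns : I ∩ J = insert j K' := (Finset.insert_erase hjIJ).symm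
    have h5 : E * (F * (xP m K' * R)) = xP m (I ∩ J) * R := by
      rw [hIns, xP_insert j K' (Finset.notMem_erase j _),
        show Xv m j = E * F from rfl, mul_assoc, mul_assoc]
    refine ⟨c₁ * c₂ * c₃⁻¹ * c₄, ?_⟩
    calc eP m I * fP m J
        = ((c₁ : ℂ) • (E * PE)) * ((c₂ : ℂ) • (F * PF)) := by rw [hc₁, hc₂]
      _ = ((c₁ : ℂ) * (c₂ : ℂ)) • ((E * PE) * (F * PF)) := by
          rw [smul_mul_smul_comm]
      _ = ((c₁ : ℂ) * (c₂ : ℂ)) • (E * ((PE * F) * PF)) := by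
          rw [mul_assoc E PE, ← mul_assoc PE F PF]
      _ = (((c₁ : ℂ) * (c₂ : ℂ)) * ((c₃⁻¹ : ℂˣ) : ℂ)) • (E * (F * (PE * PF))) := by
          rw [hPEF, smul_mul_assoc, mul_smul_comm, smul_smul, mul_assoc F PE PF]
      _ = ((((c₁ : ℂ) * (c₂ : ℂ)) * ((c₃⁻¹ : ℂˣ) : ℂ)) * (c₄ : ℂ)) •
            (E * (F * (xP m K' * R))) := by
          rw [hc₄, mul_smul_comm, mul_smul_comm, smul_smul]
      _ = ((c₁ * c₂ * c₃⁻¹ * c₄ : ℂˣ) : ℂ) • (xP m (I ∩ J) * R) := by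
          rw [h5]
          norm_cast


noncomputable def TT (m : ℕ) (I' J' A : Finset (Fin m)) :
    ExteriorAlgebra ℂ ((Fin m → ℂ) × (Fin m → ℂ)) :=
  xP m A * (eP m I' * fP m J')

lemma omegaForm_eq : omegaForm m = ∑ j : Fin m, Xv m j := rfl

lemma Xv_mul_TT_mem_A {j : Fin m} {A : Finset (Fin m)} (I' J' : Finset (Fin m))
    (hj : j ∈ A) : Xv m j * TT m I' J' A = 0 := by
  rw [TT, ← mul_assoc, Xv_mul_xP_of_mem j A hj, zero_mul]

lemma Xv_mul_EF_zero_left {j : Fin m} {I' : Finset (Fin m)} (J' : Finset (Fin m))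
    (hj : j ∈ I') : Xv m j * (eP m I' * fP m J') = 0 := by
  have h0 : ι ℂ (eVec m j) * eP m I' = 0 := iota_e_mul_eP_of_mem I' j hj
  obtain ⟨c, hc⟩ := iota_mul_prod (eVec m) (I'.sort (· ≤ ·)) (fVec m j)
  have hc' : ι ℂ (fVec m j) * eP m I' = (c : ℂ) • (eP m I' * ι ℂ (fVec m j)) := hc
  rw [show Xv m j = ι ℂ (eVec m j) * ι ℂ (fVec m j) from rfl,
    mul_assoc (ι ℂ (eVec m j)) (ι ℂ (fVec m j)),
    ← mul_assoc (ι ℂ (fVec m j)) (eP m I'), hc', smul_mul_assoc, mul_smul_comm,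
    mul_assoc (eP m I'), ← mul_assoc (ι ℂ (eVec m j)) (eP m I'), h0, zero_mul,
    smul_zero]

lemma Xv_mul_EF_zero_right {j : Fin m} {J' : Finset (Fin m)} (I' : Finset (Fin m))
    (hj : j ∈ J') : Xv m j * (eP m I' * fP m J') = 0 := by
  rw [← mul_assoc, (Xv_comm_eP j I').eq, mul_assoc,
    show Xv m j = ι ℂ (eVec m j) * ι ℂ (fVec m j) from rfl,
    mul_assoc (ι ℂ (eVec m j)), iota_f_mul_fP_of_mem J' j hj, mul_zero, mul_zero]

lemma Xv_mul_TT_insert {j : Fin m} {A : Finset (Fin m)} (I' J' : Finset (Fin m))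
    (hj : j ∉ A) : Xv m j * TT m I' J' A = TT m I' J' (insert j A) := by
  rw [TT, TT, ← mul_assoc, ← xP_insert j A hj]

lemma Xv_mul_TT_zero_I {j : Fin m} {I' : Finset (Fin m)} (J' A : Finset (Fin m))
    (hj : j ∈ I') : Xv m j * TT m I' J' A = 0 := by
  rw [TT, ← mul_assoc,
    (comm_xP j A (Xv m j) (fun i => Xv_comm_Xv j i)).eq, mul_assoc,
    Xv_mul_EF_zero_left J' hj, mul_zero]

lemma Xv_mul_TT_zero_J {j : Fin m} {J' : Finset (Fin m)} (I' A : Finset (Fin m))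
    (hj : j ∈ J') : Xv m j * TT m I' J' A = 0 := by
  rw [TT, ← mul_assoc,
    (comm_xP j A (Xv m j) (fun i => Xv_comm_Xv j i)).eq, mul_assoc,
    Xv_mul_EF_zero_right I' hj, mul_zero]

lemma omega_mul_sum (I' J' : Finset (Fin m)) (c : Finset (Fin m) → ℂ)
    (hc : ∀ A : Finset (Fin m), ¬A ⊆ (Finset.univ \ I') \ J' → c A = 0) :
    omegaForm m * (∑ A : Finset (Fin m), c A • TT m I' J' A)
      = ∑ B : Finset (Fin m), (if B ⊆ (Finset.univ \ I') \ J'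
          then ∑ j ∈ B, c (B.erase j) else 0) • TT m I' J' B := by
  classical
  set S := (Finset.univ \ I') \ J' with hS
  have hmemS : ∀ j : Fin m, j ∈ S ↔ j ∉ I' ∧ j ∉ J' := by
    intro j
    simp [hS, Finset.mem_sdiff]
  rw [omegaForm_eq, Finset.sum_mul]
  have step1 : ∀ j : Fin m, Xv m j * (∑ A : Finset (Fin m), c A • TT m I' J' A)
      = ∑ A : Finset (Fin m), c A • (Xv m j * TT m I' J' A) := by
    intro j
    rw [Finset.mul_sum]
    exact Finset.sum_congr rfl fun A _ => (mul_smul_comm _ _ _)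
  rw [Finset.sum_congr rfl fun j _ => step1 j, Finset.sum_comm]
  have step2 : ∀ A : Finset (Fin m), ∑ j : Fin m, c A • (Xv m j * TT m I' J' A)
      = ∑ j ∈ S \ A, c A • TT m I' J' (insert j A) := by
    intro A
    rw [← Finset.sum_subset (Finset.subset_univ (S \ A))]
    · refine Finset.sum_congr rfl fun j hj => ?_
      obtain ⟨hjS, hjA⟩ := Finset.mem_sdiff.1 hj
      rw [Xv_mul_TT_insert I' J' hjA]
    · intro j _ hj
      by_cases hjA : j ∈ A
      · rw [Xv_mul_TT_mem_A I' J' hjA, smul_zero]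
      · have : j ∈ I' ∨ j ∈ J' := by
          by_contra hcon
          push_neg at hcon
          exact hj (Finset.mem_sdiff.2 ⟨(hmemS j).2 ⟨hcon.1, hcon.2⟩, hjA⟩)
        rcases this with h | h
        · rw [Xv_mul_TT_zero_I J' A h, smul_zero]
        · rw [Xv_mul_TT_zero_J I' A h, smul_zero]
  rw [Finset.sum_congr rfl fun A _ => step2 A]
  -- restrict the outer sum to the powerset of S
  rw [← Finset.sum_subset (Finset.subset_univ S.powerset)
    (fun A _ hA => by
      rw [hc A (fun h => hA (Finset.mem_powerset.2 h))]
      simp)]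
  -- reindex
  have reind : ∑ A ∈ S.powerset, ∑ j ∈ S \ A, c A • TT m I' J' (insert j A)
      = ∑ B ∈ S.powerset, ∑ j ∈ B, c (B.erase j) • TT m I' J' B := by
    rw [Finset.sum_sigma', Finset.sum_sigma']
    refine Finset.sum_nbij' (fun p => ⟨insert p.2 p.1, p.2⟩)
      (fun p => ⟨p.1.erase p.2, p.2⟩) ?_ ?_ ?_ ?_ ?_
    · rintro ⟨A, j⟩ hp
      rw [Finset.mem_sigma] at hp ⊢
      obtain ⟨hA, hj⟩ := hp
      rw [Finset.mem_powerset] at hA ⊢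
      obtain ⟨hjS, hjA⟩ := Finset.mem_sdiff.1 hj
      exact ⟨Finset.insert_subset hjS hA, Finset.mem_insert_self j A⟩
    · rintro ⟨B, j⟩ hp
      rw [Finset.mem_sigma] at hp ⊢
      obtain ⟨hB, hj⟩ := hp
      rw [Finset.mem_powerset] at hB ⊢
      exact ⟨(Finset.erase_subset j B).trans hB,
        Finset.mem_sdiff.2 ⟨hB hj, Finset.notMem_erase j B⟩⟩
    · rintro ⟨A, j⟩ hp
      rw [Finset.mem_sigma] at hp
      obtain ⟨_, hjA⟩ := Finset.mem_sdiff.1 hp.2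
      have : (insert j A).erase j = A := Finset.erase_insert hjA
      simp [this]
    · rintro ⟨B, j⟩ hp
      rw [Finset.mem_sigma] at hp
      have : insert j (B.erase j) = B := Finset.insert_erase hp.2
      simp [this]
    · rintro ⟨A, j⟩ hp
      rw [Finset.mem_sigma] at hp
      obtain ⟨_, hjA⟩ := Finset.mem_sdiff.1 hp.2
      simp only
      rw [Finset.erase_insert hjA]
  rw [reind]
  -- collapse the inner sum into a scalar
  have step3 : ∀ B ∈ S.powerset, ∑ j ∈ B, c (B.erase j) • TT m I' J' B
      = (if B ⊆ S then ∑ j ∈ B, c (B.erase j) else 0) • TT m I' J' B := by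
    intro B hB
    rw [if_pos (Finset.mem_powerset.1 hB), Finset.sum_smul]
  rw [Finset.sum_congr rfl step3]
  refine Finset.sum_subset (Finset.subset_univ S.powerset) fun B _ hB => ?_
  rw [if_neg (fun h => hB (Finset.mem_powerset.2 h)), zero_smul]

lemma TT_eq_smul_gen (I' J' A : Finset (Fin m)) (hd : Disjoint I' J')
    (hA : A ⊆ (Finset.univ \ I') \ J') :
    ∃ c : ℂˣ, TT m I' J' A = (c : ℂ) • (eP m (A ∪ I') * fP m (A ∪ J')) := by
  have hAJ : ∀ x, x ∈ A → x ∉ J' := fun x hx => (Finset.mem_sdiff.1 (hA hx)).2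
  have hAI' : ∀ x, x ∈ A → x ∉ I' := fun x hx =>
    (Finset.mem_sdiff.1 (Finset.mem_sdiff.1 (hA hx)).1).2
  have hIJ : (A ∪ I') ∩ (A ∪ J') = A := by
    ext x
    simp only [Finset.mem_inter, Finset.mem_union]
    constructor
    · rintro ⟨hx1 | hx1, hx2 | hx2⟩
      · exact hx1
      · exact hx1
      · exact hx2
      · exact absurd hx2 (Finset.disjoint_left.1 hd hx1)
    · intro hx
      exact ⟨Or.inl hx, Or.inl hx⟩
  have hIdiff : (A ∪ I') \ (A ∪ J') = I' := by
    ext x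
    simp only [Finset.mem_sdiff, Finset.mem_union, not_or]
    constructor
    · rintro ⟨hx1 | hx1, hx2, hx3⟩
      · exact absurd hx1 hx2
      · exact hx1
    · intro hx
      exact ⟨Or.inr hx, fun h => hAI' x h hx, Finset.disjoint_left.1 hd hx⟩
  have hJdiff : (A ∪ J') \ (A ∪ I') = J' := by
    ext x
    simp only [Finset.mem_sdiff, Finset.mem_union, not_or]
    constructor
    · rintro ⟨hx1 | hx1, hx2, hx3⟩
      · exact absurd hx1 hx2
      · exact hx1
    · intro hx
      exact ⟨Or.inr hx, fun h => hAJ x h hx, Finset.disjoint_right.1 hd hx⟩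
  obtain ⟨cu, hcu⟩ := gen_normal ((A ∪ I') ∩ (A ∪ J')).card (A ∪ I') (A ∪ J') rfl
  rw [hIJ, hIdiff, hJdiff] at hcu
  refine ⟨cu⁻¹, ?_⟩
  rw [hcu, smul_smul]
  norm_num [TT]

lemma TT_mem_piece (I' J' A : Finset (Fin m)) (hd : Disjoint I' J')
    (hA : A ⊆ (Finset.univ \ I') \ J') {l s : ℕ}
    (hl : A.card + I'.card = l) (hs : A.card + J'.card = s) :
    TT m I' J' A ∈ piece m l s := by
  obtain ⟨c, hc⟩ := TT_eq_smul_gen I' J' A hd hA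
  rw [hc]
  refine Submodule.smul_mem _ _ (Submodule.subset_span ?_)
  have hAI : Disjoint A I' := Finset.disjoint_left.2 fun x hx =>
    (Finset.mem_sdiff.1 (Finset.mem_sdiff.1 (hA hx)).1).2
  have hAJ : Disjoint A J' := Finset.disjoint_left.2 fun x hx =>
    (Finset.mem_sdiff.1 (hA hx)).2
  exact ⟨A ∪ I', A ∪ J', by rw [Finset.card_union_of_disjoint hAI, hl],
    by rw [Finset.card_union_of_disjoint hAJ, hs], rfl⟩

end Spec

end HLExt

set_option maxHeartbeats 1000000 in
/-- Hard Lefschetz surjectivity (Lemma 3.3, fiberwise): for `l + s ≥ n`, the map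
`L : Λ^{l-1}(W*) ⊗ Λ^{s-1}(W̄*) → Λˡ(W*) ⊗ Λˢ(W̄*)`, `u ↦ ω ∧ u`, is surjective,
where `dim W = n - 1`. -/
theorem lefschetz_surjective (n l s : ℕ) (hl : 1 ≤ l) (hs : 1 ≤ s) (h : n ≤ l + s)
    (v : ExteriorAlgebra ℂ ((Fin (n - 1) → ℂ) × (Fin (n - 1) → ℂ)))
    (hv : v ∈ piece (n - 1) l s) :
    ∃ u ∈ piece (n - 1) (l - 1) (s - 1), omegaForm (n - 1) * u = v := by
  classical
  set m := n - 1 with hm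
  suffices hle : piece m l s ≤
      Submodule.map (LinearMap.mulLeft ℂ (omegaForm m)) (piece m (l - 1) (s - 1)) by
    obtain ⟨u, hu, hωu⟩ := Submodule.mem_map.1 (hle hv)
    exact ⟨u, hu, hωu⟩
  rw [piece, Submodule.span_le]
  rintro x ⟨I, J, hI, hJ, rfl⟩
  set I' := I \ J with hI'
  set J' := J \ I with hJ'
  set K := I ∩ J with hK
  set k := K.card with hk
  set S := (Finset.univ \ I') \ J' with hS
  have hd : Disjoint I' J' := disjoint_sdiff_sdiff
  have hKS : K ⊆ S := by
    intro x hx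
    obtain ⟨hxI, hxJ⟩ := Finset.mem_inter.1 hx
    simp only [hS, Finset.mem_sdiff, Finset.mem_univ, true_and, hI', hJ']
    tauto
  have hkI : I'.card + k = l := by
    rw [hI', hk, hK, ← hI]
    exact Finset.card_sdiff_add_card_inter I J
  have hkJ : J'.card + k = s := by
    rw [hJ', hk, hK, Finset.inter_comm, ← hJ]
    exact Finset.card_sdiff_add_card_inter J I
  have hSuniv : S = Finset.univ \ (I' ∪ J') := by
    ext x
    simp [hS, and_assoc, not_or]
  have hcardIJ : (I' ∪ J').card = I'.card + J'.card :=
    Finset.card_union_of_disjoint hd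
  have hcardS : S.card = m - (I'.card + J'.card) := by
    rw [hSuniv, Finset.card_sdiff_of_subset (Finset.subset_univ _), hcardIJ, Finset.card_univ,
      Fintype.card_fin]
  have hIJm : I'.card + J'.card ≤ m := by
    have h2 := Finset.card_le_univ (I' ∪ J')
    rw [Fintype.card_fin] at h2
    omega
  have hlm : l ≤ m := by
    have h2 := Finset.card_le_univ I
    rw [Fintype.card_fin] at h2
    omega
  have hcond : S.card + 1 ≤ 2 * k := by omega
  have hk1 : 1 ≤ k := by omega
  obtain ⟨c, hclev, hUc⟩ := HLComb.usop_surj S k hcond (HLComb.delta K)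
    (HLComb.delta_levP hKS rfl)
  set u₀ := ∑ A : Finset (Fin m), c A • HLExt.TT m I' J' A with hu₀
  have hbridge := HLExt.omega_mul_sum I' J' c (fun A hA => hclev A (fun h2 => hA h2.1))
  have hsum : ∑ B : Finset (Fin m), (if B ⊆ S then ∑ j ∈ B, c (B.erase j) else 0)
      • HLExt.TT m I' J' B = HLExt.TT m I' J' K := by
    have e1 : ∀ B : Finset (Fin m), (if B ⊆ S then ∑ j ∈ B, c (B.erase j) else 0)
        • HLExt.TT m I' J' B = HLComb.delta K B • HLExt.TT m I' J' B := by
      intro B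
      rw [show (if B ⊆ S then ∑ j ∈ B, c (B.erase j) else 0) = HLComb.USop S c B
        from rfl, hUc]
    rw [Finset.sum_congr rfl fun B _ => e1 B, Finset.sum_eq_single K]
    · rw [HLComb.delta, if_pos rfl, one_smul]
    · intro B _ hB
      rw [HLComb.delta, if_neg hB, zero_smul]
    · intro hK2
      exact absurd (Finset.mem_univ K) hK2
  obtain ⟨cu, hcu⟩ := HLExt.gen_normal (m := m) K.card I J rfl
  have hcu' : HLExt.eP m I * HLExt.fP m J = (cu : ℂ) • HLExt.TT m I' J' K := hcu
  have hmem : (cu : ℂ) • u₀ ∈ piece m (l - 1) (s - 1) := by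
    refine Submodule.smul_mem _ _ (Submodule.sum_mem _ fun A _ => ?_)
    by_cases hA : A ⊆ S ∧ A.card = k - 1
    · exact Submodule.smul_mem _ _
        (HLExt.TT_mem_piece I' J' A hd hA.1 (by omega) (by omega))
    · rw [hclev A hA, zero_smul]
      exact Submodule.zero_mem _
  refine ⟨(cu : ℂ) • u₀, hmem, ?_⟩
  rw [LinearMap.mulLeft_apply, mul_smul_comm, hu₀, hbridge, hsum]
  exact hcu'.symm
end

section
/- Let H be a Hilbert space with a self-adjoint nonnegative operator □ (Laplacian) admitting a decomposition H = Ker □ ⊕ Im □ with harmonic projector 𝐇 onto Ker □ and Green operator N satisfying u = 𝐇u + □Nu for all u. Let d' be an operator such that for every u, d'(□u) = a·d''d''*(d'u) + b·d''*d''(d'u) for positive constants a, b, where □ = d''d''* + d''*d''. If u satisfies □(𝐇u) = 0 (i.e., 𝐇u is harmonic) then d'(𝐇u) is harmonic: □(d'𝐇u) = 0. -/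
open scoped RealInnerProductSpace

/-!
Put `v = 𝐇u` and `w = d'v`. Since `□v = 0`, the key equality gives
`a d''d''*w + b d''*d''w = d'(□v) = 0`; pairing with `w` turns this into
`a ‖d''*w‖² + b ‖d''w‖² = 0`, so `d''*w = 0` and `d''w = 0`, whence `□w = 0`.
-/

section AdjointPair

variable {E F : Type*} [NormedAddCommGroup E] [InnerProductSpace ℝ E]
  [NormedAddCommGroup F] [InnerProductSpace ℝ F] {T : E → F} {S : F → E}

theorem inner_apply_adjoint_apply_self (hTS : ∀ x y, ⟪T x, y⟫ = ⟪x, S y⟫) (y : F) :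
    ⟪T (S y), y⟫ = ‖S y‖ ^ 2 := by
  rw [hTS, real_inner_self_eq_norm_sq]

theorem inner_adjoint_apply_apply_self (hTS : ∀ x y, ⟪T x, y⟫ = ⟪x, S y⟫) (x : E) :
    ⟪S (T x), x⟫ = ‖T x‖ ^ 2 := by
  rw [real_inner_comm, ← hTS, real_inner_self_eq_norm_sq]

end AdjointPair

theorem adjoint_apply_eq_zero_and_apply_eq_zero_of_smul_add_smul_eq_zero {E : Type*}
    [NormedAddCommGroup E] [InnerProductSpace ℝ E] {T S : E → E}
    (hTS : ∀ x y, ⟪T x, y⟫ = ⟪x, S y⟫) {a b : ℝ} (ha : 0 < a) (hb : 0 < b) {w : E}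
    (hw : a • T (S w) + b • S (T w) = 0) : S w = 0 ∧ T w = 0 := by
  have hpair : a * ‖S w‖ ^ 2 + b * ‖T w‖ ^ 2 = 0 := by
    have := congrArg (⟪·, w⟫) hw
    simpa only [inner_add_left, real_inner_smul_left, inner_zero_left,
      inner_apply_adjoint_apply_self hTS, inner_adjoint_apply_apply_self hTS] using this
  obtain ⟨hS, hT⟩ := (add_eq_zero_iff_of_nonneg (by positivity) (by positivity)).1 hpair
  simp only [mul_eq_zero, ha.ne', hb.ne', false_or, pow_eq_zero_iff two_ne_zero,
    norm_eq_zero] at hS hT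
  exact ⟨hS, hT⟩

/-- If `□ = d''d''* + d''*d''` (with `d''*` adjoint to `d''`), and the key equality
`d'(□w) = a·d''d''*(d'w) + b·d''*d''(d'w)` holds with `a, b > 0`, then `𝐇u` harmonic
implies `d'(𝐇u)` harmonic. -/
theorem dprime_harmonic {H : Type*} [NormedAddCommGroup H] [InnerProductSpace ℝ H]
    (d' d'' d''s Hh : H →ₗ[ℝ] H)
    (hadj : ∀ x y : H, ⟪d'' x, y⟫ = ⟪x, d''s y⟫)
    (a b : ℝ) (ha : 0 < a) (hb : 0 < b)
    (hkey : ∀ w : H, d' (d'' (d''s w) + d''s (d'' w)) =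
      a • d'' (d''s (d' w)) + b • d''s (d'' (d' w)))
    (u : H) (hu : d'' (d''s (Hh u)) + d''s (d'' (Hh u)) = 0) :
    d'' (d''s (d' (Hh u))) + d''s (d'' (d' (Hh u))) = 0 := by
  have hweighted : a • d'' (d''s (d' (Hh u))) + b • d''s (d'' (d' (Hh u))) = 0 := by
    rw [← hkey, hu, map_zero]
  obtain ⟨hs, hd⟩ :=
    adjoint_apply_eq_zero_and_apply_eq_zero_of_smul_add_smul_eq_zero hadj ha hb hweighted
  rw [hs, hd, map_zero, map_zero, add_zero]
end
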